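/- arXiv:2506.09297 — 2 statements merged into one kernel-verified Lean document; each statement's English description precedes it below -/
import Mathlib

section
/- Let μ be a d×N real matrix with Cᵀ S μ + μᵀ S C = 0. Set A = Cᵀ S μ and W = μᵀ S μ, let B be the 2N×2N block matrix B = [[A, −W],[Id_N, A]], let [C μ] be the d×2N matrix whose first N columns are those of C and last N columns those of μ, and let J be the 2N×N matrix consisting of Id_N stacked above the N×N zero matrix. Then the d×N matrix X = [C μ] · exp(B) · J · exp(−A), where exp denotes the matrix exponential, satisfies Xᵀ S X = Id_N; that is, the Stiefel geodesic formula produces a point of the generalized Stiefel manifold. -/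
/-!
With `A = Cᵀ S μ` and `W = μᵀ S μ`, the tangency condition makes `A` skew and the Gram matrix of
`[C μ]` with respect to `S` equal to `G = [[1, A], [-A, W]]`. The generator
`B = [[A, -W], [1, A]]` satisfies `G B = -Bᵀ G`, so `exp B` preserves `G`; compressing by `J`
picks out the block `Jᵀ G J = 1`, and `exp (-A)` is orthogonal because `A` is skew.
-/

open Matrix NormedSpace

namespace Matrix

variable {k m n : Type*}

theorem transpose_mul_mul_mul_mul {R : Type*} [CommSemiring R] [Fintype m] [Fintype n]
    [Fintype k] (S : Matrix m m R) (P : Matrix m n R) (Q : Matrix n k R) :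
    (P * Q)ᵀ * S * (P * Q) = Qᵀ * (Pᵀ * S * P) * Q := by
  simp only [transpose_mul, Matrix.mul_assoc]

theorem transpose_fromCols_mul_mul_fromCols {R : Type*} [CommSemiring R] [Fintype m]
    [Fintype n] (S : Matrix m m R) (C μ : Matrix m n R) :
    (fromCols C μ)ᵀ * S * fromCols C μ =
      fromBlocks (Cᵀ * S * C) (Cᵀ * S * μ) (μᵀ * S * C) (μᵀ * S * μ) := by
  rw [transpose_fromCols, fromRows_mul, fromRows_mul_fromCols]

variable [Fintype n] [DecidableEq n]

theorem transpose_exp_mul_mul_exp {G B : Matrix n n ℝ} (h : G * B = -Bᵀ * G) :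
    (exp B)ᵀ * G * exp B = G := by
  let _ : NormedRing (Matrix n n ℝ) := Matrix.linftyOpNormedRing
  let _ : NormedAlgebra ℝ (Matrix n n ℝ) := Matrix.linftyOpNormedAlgebra
  let _ : NormedAlgebra ℚ (Matrix n n ℝ) := NormedAlgebra.restrictScalars ℚ ℝ _
  have := SemiconjBy.exp_neg_mul_mul_exp_eq_self (x := G) (a := B) (b := -Bᵀ) h
  rw [neg_neg] at this
  rwa [← exp_transpose]

theorem transpose_exp_mul_exp_of_transpose_eq_neg {A : Matrix n n ℝ} (hA : Aᵀ = -A) :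
    (exp A)ᵀ * exp A = 1 := by
  have h : (1 : Matrix n n ℝ) * A = -Aᵀ * 1 := by
    rw [hA, neg_neg, Matrix.one_mul, Matrix.mul_one]
  simpa only [Matrix.mul_one] using transpose_exp_mul_mul_exp h

end Matrix

theorem stmt11_general {d N : ℕ}
    (S : Matrix (Fin d) (Fin d) ℝ) (hS : Sᵀ = S)
    (C : Matrix (Fin d) (Fin N) ℝ) (hC : Cᵀ * S * C = 1)
    (μ : Matrix (Fin d) (Fin N) ℝ) (hμ : Cᵀ * S * μ + μᵀ * S * C = 0)
    (X : Matrix (Fin d) (Fin N) ℝ)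
    (hX : X = Matrix.fromCols C μ *
        NormedSpace.exp (Matrix.fromBlocks (Cᵀ * S * μ) (-(μᵀ * S * μ)) 1 (Cᵀ * S * μ)) *
        Matrix.fromRows (1 : Matrix (Fin N) (Fin N) ℝ) (0 : Matrix (Fin N) (Fin N) ℝ) *
        NormedSpace.exp (-(Cᵀ * S * μ))) :
    Xᵀ * S * X = 1 := by
  set A := Cᵀ * S * μ
  set W := μᵀ * S * μ
  have hμSC : μᵀ * S * C = -A := eq_neg_of_add_eq_zero_right hμ
  have hA : Aᵀ = -A := by
    rw [transpose_mul, transpose_mul, transpose_transpose, hS, ← Matrix.mul_assoc, hμSC]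
  have hW : Wᵀ = W := by
    rw [transpose_mul, transpose_mul, transpose_transpose, hS, ← Matrix.mul_assoc]
  set G : Matrix (Fin N ⊕ Fin N) (Fin N ⊕ Fin N) ℝ := fromBlocks 1 A (-A) W
  set B : Matrix (Fin N ⊕ Fin N) (Fin N ⊕ Fin N) ℝ := fromBlocks A (-W) 1 A
  set J : Matrix (Fin N ⊕ Fin N) (Fin N) ℝ := fromRows 1 0
  have hGram : (fromCols C μ)ᵀ * S * fromCols C μ = G := by
    rw [transpose_fromCols_mul_mul_fromCols, hC, hμSC]
  have hflow : (exp B)ᵀ * G * exp B = G := by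
    refine transpose_exp_mul_mul_exp ?_
    rw [fromBlocks_transpose, fromBlocks_neg, fromBlocks_multiply, fromBlocks_multiply,
      transpose_one, transpose_neg, hA, hW]
    congr 1 <;> noncomm_ring
  have hJ : Jᵀ * G * J = 1 := by
    simp [G, J, transpose_fromRows, fromCols_mul_fromBlocks, fromCols_mul_fromRows]
  have hrot : (exp (-A))ᵀ * exp (-A) = 1 :=
    transpose_exp_mul_exp_of_transpose_eq_neg (by rw [transpose_neg, hA])
  rw [hX, transpose_mul_mul_mul_mul, transpose_mul_mul_mul_mul, transpose_mul_mul_mul_mul,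
    hGram, hflow, hJ, Matrix.mul_one, hrot]

/-- The Stiefel geodesic formula
`X = [C μ] · exp([[A, −W],[Id, A]]) · [Id; 0] · exp(−A)`, with `A = Cᵀ S μ` and
`W = μᵀ S μ`, produces a point of the generalized Stiefel manifold: `Xᵀ S X = Id`. -/
theorem stmt11 {d N : ℕ} (hd : 0 < d) (hN : 0 < N) (hNd : N ≤ d)
    (S : Matrix (Fin d) (Fin d) ℝ) (hS : Sᵀ = S)
    (C : Matrix (Fin d) (Fin N) ℝ) (hC : Cᵀ * S * C = 1)
    (μ : Matrix (Fin d) (Fin N) ℝ) (hμ : Cᵀ * S * μ + μᵀ * S * C = 0)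
    (X : Matrix (Fin d) (Fin N) ℝ)
    (hX : X = Matrix.fromCols C μ *
        NormedSpace.exp (Matrix.fromBlocks (Cᵀ * S * μ) (-(μᵀ * S * μ)) 1 (Cᵀ * S * μ)) *
        Matrix.fromRows (1 : Matrix (Fin N) (Fin N) ℝ) (0 : Matrix (Fin N) (Fin N) ℝ) *
        NormedSpace.exp (-(Cᵀ * S * μ))) :
    Xᵀ * S * X = 1 :=
  stmt11_general S hS C hC μ hμ X hX
end

section
/- Let O be an invertible d×d real matrix with Oᵀ S O = Id_d, and let η be a d×N real matrix with Cᵀ S η = 0. Suppose η = O U D V where U is a d×N real matrix with Uᵀ U = Id_N, V is an N×N orthogonal matrix (Vᵀ V = V Vᵀ = Id_N), and D = diag(σ₁,…,σ_N) is a diagonal N×N matrix (a thin singular value decomposition of O⁻¹η). Let cos(D) = diag(cos σ₁,…,cos σ_N) and sin(D) = diag(sin σ₁,…,sin σ_N). Then the d×N matrix X = (C Vᵀ cos(D) + O U sin(D)) V satisfies Xᵀ S X = Id_N; that is, the Grassmannian geodesic formula produces a point of the generalized Stiefel manifold. -/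
/-! The frames `C Vᵀ` and `O U` are both `S`-orthonormal, and `Cᵀ S η = 0` makes them
`S`-orthogonal on the support of `σ`, which is all that `sin D` sees. Hence the Gram matrix
of `C Vᵀ cos D + O U sin D` is `cos² D + sin² D = 1`, and right multiplication by the
orthogonal `V` preserves this. -/

open Matrix

namespace Matrix

variable {R m n : Type*} [CommRing R] [Fintype n]

theorem transpose_mul_mul_mul_self_mul {k : Type*} [Fintype m] [Fintype k] (S : Matrix m m R)
    (Y : Matrix m n R) (V : Matrix n k R) :
    (Y * V)ᵀ * S * (Y * V) = Vᵀ * (Yᵀ * S * Y) * V := by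
  simp only [transpose_mul, Matrix.mul_assoc]

variable [DecidableEq n]

theorem mul_diagonal_apply_eq_zero [NoZeroDivisors R] {M : Matrix m n R} {σ : n → R}
    (h : M * diagonal σ = 0) {f : R → R} (hf : f 0 = 0) :
    M * diagonal (fun i => f (σ i)) = 0 := by
  ext i j
  have hij : M i j * σ j = 0 := by simpa [mul_diagonal] using congrFun (congrFun h i) j
  rcases mul_eq_zero.mp hij with hM | hσ
  · simp [mul_diagonal, hM]
  · simp [mul_diagonal, hσ, hf]

variable [Fintype m]

theorem transpose_mul_mul_self_mul_diagonal_add {S : Matrix m m R} (hS : Sᵀ = S)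
    {A B : Matrix m n R} (hA : Aᵀ * S * A = 1) (hB : Bᵀ * S * B = 1) {c s : n → R}
    (hAB : Aᵀ * S * B * diagonal s = 0) :
    (A * diagonal c + B * diagonal s)ᵀ * S * (A * diagonal c + B * diagonal s) =
      diagonal (fun i => c i ^ 2 + s i ^ 2) := by
  have hBA : diagonal s * (Bᵀ * S * A) = 0 := by
    simpa [transpose_mul, hS, Matrix.mul_assoc] using congrArg transpose hAB
  calc (A * diagonal c + B * diagonal s)ᵀ * S * (A * diagonal c + B * diagonal s)
      = diagonal c * (Aᵀ * S * A) * diagonal c + diagonal c * (Aᵀ * S * B * diagonal s)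
          + diagonal s * (Bᵀ * S * A) * diagonal c
          + diagonal s * (Bᵀ * S * B) * diagonal s := by
        simp only [transpose_add, transpose_mul, diagonal_transpose, Matrix.add_mul,
          Matrix.mul_add, Matrix.mul_assoc]
        abel
    _ = diagonal (fun i => c i ^ 2 + s i ^ 2) := by
        rw [hA, hB, hAB, hBA]
        simp only [Matrix.mul_one, Matrix.mul_zero, Matrix.zero_mul, add_zero,
          diagonal_mul_diagonal, diagonal_add, sq]

end Matrix

theorem stmt12_general {d N : ℕ}
    (S : Matrix (Fin d) (Fin d) ℝ) (hS : Sᵀ = S)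
    (C : Matrix (Fin d) (Fin N) ℝ) (hC : Cᵀ * S * C = 1)
    (O : Matrix (Fin d) (Fin d) ℝ) (hOS : Oᵀ * S * O = 1)
    (η : Matrix (Fin d) (Fin N) ℝ) (hη : Cᵀ * S * η = 0)
    (U : Matrix (Fin d) (Fin N) ℝ) (hU : Uᵀ * U = 1)
    (V : Matrix (Fin N) (Fin N) ℝ) (hV : Vᵀ * V = 1) (hV' : V * Vᵀ = 1)
    (σ : Fin N → ℝ) (hSVD : η = O * U * Matrix.diagonal σ * V)
    (X : Matrix (Fin d) (Fin N) ℝ)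
    (hX : X = (C * Vᵀ * Matrix.diagonal (fun i => Real.cos (σ i)) +
        O * U * Matrix.diagonal (fun i => Real.sin (σ i))) * V) :
    Xᵀ * S * X = 1 := by
  have hCV : (C * Vᵀ)ᵀ * S * (C * Vᵀ) = 1 := by
    rw [transpose_mul_mul_mul_self_mul, hC, transpose_transpose, Matrix.mul_one, hV']
  have hOU : (O * U)ᵀ * S * (O * U) = 1 := by
    rw [transpose_mul_mul_mul_self_mul, hOS, Matrix.mul_one, hU]
  have hCOU : Cᵀ * S * (O * U) * diagonal σ = 0 := by
    simpa [hSVD, Matrix.mul_assoc, hV'] using congrArg (· * Vᵀ) hη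
  have hCVOU : (C * Vᵀ)ᵀ * S * (O * U) * diagonal (fun i => Real.sin (σ i)) = 0 := by
    have hswap : (C * Vᵀ)ᵀ * S * (O * U) = V * (Cᵀ * S * (O * U)) := by
      simp only [transpose_mul, transpose_transpose, Matrix.mul_assoc]
    rw [hswap, Matrix.mul_assoc, mul_diagonal_apply_eq_zero hCOU Real.sin_zero, Matrix.mul_zero]
  rw [hX, transpose_mul_mul_mul_self_mul,
    transpose_mul_mul_self_mul_diagonal_add hS hCV hOU hCVOU]
  simpa [Real.cos_sq_add_sin_sq] using hV

/-- The Grassmannian geodesic formula `X = (C Vᵀ cos(D) + O U sin(D)) V`, where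
`η = O U D V` is a thin SVD of `O⁻¹ η` of a Grassmann tangent vector `η`,
produces a point of the generalized Stiefel manifold: `Xᵀ S X = Id`. -/
theorem stmt12 {d N : ℕ} (hd : 0 < d) (hN : 0 < N) (hNd : N ≤ d)
    (S : Matrix (Fin d) (Fin d) ℝ) (hS : Sᵀ = S)
    (C : Matrix (Fin d) (Fin N) ℝ) (hC : Cᵀ * S * C = 1)
    (O : Matrix (Fin d) (Fin d) ℝ) (hO : IsUnit O.det) (hOS : Oᵀ * S * O = 1)
    (η : Matrix (Fin d) (Fin N) ℝ) (hη : Cᵀ * S * η = 0)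
    (U : Matrix (Fin d) (Fin N) ℝ) (hU : Uᵀ * U = 1)
    (V : Matrix (Fin N) (Fin N) ℝ) (hV : Vᵀ * V = 1) (hV' : V * Vᵀ = 1)
    (σ : Fin N → ℝ) (hSVD : η = O * U * Matrix.diagonal σ * V)
    (X : Matrix (Fin d) (Fin N) ℝ)
    (hX : X = (C * Vᵀ * Matrix.diagonal (fun i => Real.cos (σ i)) +
        O * U * Matrix.diagonal (fun i => Real.sin (σ i))) * V) :
    Xᵀ * S * X = 1 :=
  stmt12_general S hS C hC O hOS η hη U hU V hV hV' σ hSVD X hX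
end
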